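/- The bicircular matroid M_{f_{1,0}}(K_{m,n}), induced by f_{1,0}(F) = |V(F)|, is the unique maximal matroid on E(K_{m,n}) in which the edge set of every copy of K_{2,3} is a circuit, and val_{K_{2,3}} is its rank function. -/

import Mathlib

open Set

variable {α : Type*}

/-- `C` is a circuit of `M`: a minimal dependent subset of the ground set. -/
def Matroid.IsCircuit' (M : Matroid α) (C : Set α) : Prop :=
  C ⊆ M.E ∧ ¬ M.Indep C ∧ ∀ e ∈ C, M.Indep (C \ {e})

/-- `M` is an `X`-matroid on `E`: a matroid with ground set `E` in which every member of the
family `X` is a circuit. -/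
def IsXMatroid (E : Set α) (X : Set (Set α)) (M : Matroid α) : Prop :=
  M.E = E ∧ ∀ C ∈ X, M.IsCircuit' C

/-- The union of a list of sets. -/
def unionList (S : List (Set α)) : Set α := ⋃ Y ∈ S, Y

/-- A proper `X`-sequence: a list of members of `X` such that no term is contained in the
union of the preceding terms. -/
def ProperSeq (X : Set (Set α)) (S : List (Set α)) : Prop :=
  (∀ Y ∈ S, Y ∈ X) ∧
  ∀ i : Fin S.length, 0 < i.1 → ¬ (S.get i ⊆ unionList (S.take i.1))

/-- `val(F, S) = |F ∪ ⋃ S| - |S|`. -/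
noncomputable def valSeq (F : Set α) (S : List (Set α)) : ℤ :=
  ((F ∪ unionList S).ncard : ℤ) - S.length

/-- `val_X(F)`: the minimum of `val(F, S)` over all proper `X`-sequences `S`. -/
noncomputable def valX (X : Set (Set α)) (F : Set α) : ℤ :=
  sInf {v : ℤ | ∃ S : List (Set α), ProperSeq X S ∧ v = valSeq F S}

/-- The rank of a set `F` in a matroid `M`: the largest size of an independent subset of `F`. -/
noncomputable def mrk (M : Matroid α) (F : Set α) : ℕ :=
  sSup {n : ℕ | ∃ I ⊆ F, M.Indep I ∧ I.ncard = n}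

/-- The weak order on matroids: `M ⪯ N` iff every independent set of `M` is independent in `N`. -/
def WeakLE (M N : Matroid α) : Prop := ∀ I : Set α, M.Indep I → N.Indep I

/-- The set of vertices incident to a set of edges. -/
def verts {V : Type*} (F : Set (Sym2 V)) : Set V := {v | ∃ e ∈ F, v ∈ e}

/-- The edge sets of matchings with exactly `k` edges in the complete graph `K_n`. -/
def matchingCopies (n k : ℕ) : Set (Set (Sym2 (Fin n))) :=
  {F | F ⊆ (⊤ : SimpleGraph (Fin n)).edgeSet ∧ F.ncard = k ∧
       ∀ e ∈ F, ∀ f ∈ F, e ≠ f → ∀ v : Fin n, v ∈ e → v ∉ f}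
/-- The edge sets of copies of the complete bipartite graph `K_{s,t}` in a graph `G`. -/
def bicliqueCopies {V : Type*} (G : SimpleGraph V) (s t : ℕ) : Set (Set (Sym2 V)) :=
  {F | ∃ A B : Set V, A.ncard = s ∧ B.ncard = t ∧ (∀ a ∈ A, ∀ b ∈ B, G.Adj a b) ∧
        F = {e | ∃ a ∈ A, ∃ b ∈ B, e = s(a, b)}}

/-!
A copy of `K_{2,3}` has six edges on five vertices, while any five of its edges span at least as
many vertices as they have edges; so it is a circuit of the bicircular matroid `M`.

In any matroid `N` in which every copy of `K_{2,3}` is a circuit, each term of a proper sequence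
`S` raises the nullity of the union by at least one, whence `r_N(F) ≤ val(F, S)`. Conversely, for
`J ⊆ F` with vertex classes `A` and `B`, the biclique `K_{A,B}` is the union of a proper sequence of
`|A||B| - |A| - |B|` copies of `K_{2,3}`: add the vertices of one side one at a time, attaching a
new vertex `v` by the copies `{a₀, a} × {v, b₁, b₂}`, each of which contributes the new edge `av`.
This sequence has `val(F, S) ≤ |F| - (|J| - |V(J)|)`.

Taking `J` of maximal deficiency `|J| - |V(J)|`, Hall's theorem with deficiency gives an
`M`-independent subset of `F` missing at most that many edges, so `val_X` attains `r_M`. And if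
`N` had an independent set containing some `J` with `|J| > |V(J)|`, the same sequence would give
`r_N(J) < |J|`; hence `N ⪯ M`.
-/

open Finset in
/-- Apply Hall's theorem to `t` padded with `d` dummy elements and keep the indices that are not
matched to a dummy. -/
lemma Finset.exists_hall_subfamily_of_card_le_card_biUnion_add {ι β : Type*} [DecidableEq β]
    (s : Finset ι) (t : ι → Finset β) (d : ℕ)
    (h : ∀ u ⊆ s, u.card ≤ (u.biUnion t).card + d) :
    ∃ u ⊆ s, s.card ≤ u.card + d ∧ ∀ w ⊆ u, w.card ≤ (w.biUnion t).card := by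
  classical
  have hsub (w : Finset s) : w.map (Function.Embedding.subtype _) ⊆ s := by
    intro _ hi
    obtain ⟨⟨i, his⟩, -, rfl⟩ := mem_map.1 hi
    exact his
  set t' : s → Finset (β ⊕ Fin d) := fun i => (t i).disjSum univ
  have hall (w : Finset s) : w.card ≤ (w.biUnion t').card := by
    rcases w.eq_empty_or_nonempty with rfl | ⟨i₀, hi₀⟩
    · simp
    have hw : w.biUnion t' = ((w.map (Function.Embedding.subtype _)).biUnion t).disjSum univ := by
      ext (b | k) <;> simp [t']
      exact ⟨i₀.1, i₀.2, hi₀⟩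
    rw [hw, card_disjSum, card_univ, Fintype.card_fin, ← card_map (Function.Embedding.subtype _)]
    exact h _ (hsub w)
  obtain ⟨f, hf, hft⟩ := (all_card_le_biUnion_card_iff_exists_injective t').1 hall
  refine ⟨(s.attach.filter fun i => (f i).isLeft).map (Function.Embedding.subtype _), hsub _, ?_,
    fun w hw => ?_⟩
  · have hright : (s.attach.filter fun i => ¬ (f i).isLeft).card ≤ d := by
      refine (card_le_card_of_injOn f (t := univ.map Function.Embedding.inr) ?_ hf.injOn).trans_eq
        (by simp)
      intro i hi
      simp only [coe_filter, Set.mem_ofPred_eq, mem_attach, true_and] at hi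
      cases hfi : f i <;> simp_all
    have := card_filter_add_card_filter_not (s := s.attach) (fun i => (f i).isLeft)
    rw [card_attach] at this
    rw [card_map]
    omega
  · have hws : ∀ i ∈ w, i ∈ s := fun i hi => hsub _ (hw hi)
    calc w.card = (w.subtype (· ∈ s)).card := by rw [card_subtype, filter_true_of_mem hws]
      _ ≤ ((w.biUnion t).map Function.Embedding.inl).card := by
        refine card_le_card_of_injOn f (fun i hi => ?_) hf.injOn
        have hleft : (f i).isLeft := by
          simpa using hw (mem_subtype.1 hi)
        rcases hfi : f i with b | k
        · have hb : b ∈ t i := by simpa [t', hfi] using hft i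
          simpa using ⟨i, mem_subtype.1 hi, hb⟩
        · simp [hfi] at hleft
      _ = (w.biUnion t).card := card_map _

lemma Nat.two_le_and_three_le_or_of_add_lt_mul {a b : ℕ} (h : a + b < a * b) :
    2 ≤ a ∧ 3 ≤ b ∨ 3 ≤ a ∧ 2 ≤ b := by
  rcases Nat.lt_or_ge a 2 with ha | ha
  · interval_cases a <;> omega
  rcases Nat.lt_or_ge b 2 with hb | hb
  · interval_cases b <;> omega
  by_contra! hc
  obtain ⟨rfl, rfl⟩ : a = 2 ∧ b = 2 := by omega
  omega

section BicliqueEdges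

variable {V : Type*} {G : SimpleGraph V} {A B A' B' : Set V} {C J : Set (Sym2 V)}

def bicliqueEdges (A B : Set V) : Set (Sym2 V) := {e | ∃ a ∈ A, ∃ b ∈ B, e = s(a, b)}

lemma mk_mem_bicliqueEdges {a b : V} (ha : a ∈ A) (hb : b ∈ B) : s(a, b) ∈ bicliqueEdges A B :=
  ⟨a, ha, b, hb, rfl⟩

lemma mk_mem_bicliqueEdges_iff {x y : V} :
    s(x, y) ∈ bicliqueEdges A B ↔ x ∈ A ∧ y ∈ B ∨ y ∈ A ∧ x ∈ B := by
  constructor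
  · rintro ⟨a, ha, b, hb, he⟩
    rcases Sym2.eq_iff.1 he with ⟨rfl, rfl⟩ | ⟨rfl, rfl⟩
    exacts [Or.inl ⟨ha, hb⟩, Or.inr ⟨ha, hb⟩]
  · rintro (⟨hx, hy⟩ | ⟨hy, hx⟩)
    exacts [mk_mem_bicliqueEdges hx hy, Sym2.eq_swap ▸ mk_mem_bicliqueEdges hy hx]

lemma bicliqueEdges_comm (A B : Set V) : bicliqueEdges A B = bicliqueEdges B A := by
  ext e
  constructor <;> rintro ⟨a, ha, b, hb, rfl⟩ <;> exact ⟨b, hb, a, ha, Sym2.eq_swap⟩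

lemma bicliqueEdges_mono (hA : A ⊆ A') (hB : B ⊆ B') : bicliqueEdges A B ⊆ bicliqueEdges A' B' := by
  rintro e ⟨a, ha, b, hb, rfl⟩
  exact ⟨a, hA ha, b, hB hb, rfl⟩

lemma bicliqueEdges_union_left (A A' B : Set V) :
    bicliqueEdges (A ∪ A') B = bicliqueEdges A B ∪ bicliqueEdges A' B := by
  ext e
  constructor
  · rintro ⟨a, ha | ha, b, hb, rfl⟩
    exacts [Or.inl ⟨a, ha, b, hb, rfl⟩, Or.inr ⟨a, ha, b, hb, rfl⟩]
  · rintro (⟨a, ha, b, hb, rfl⟩ | ⟨a, ha, b, hb, rfl⟩)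
    exacts [⟨a, Or.inl ha, b, hb, rfl⟩, ⟨a, Or.inr ha, b, hb, rfl⟩]

lemma bicliqueEdges_union_right (A B B' : Set V) :
    bicliqueEdges A (B ∪ B') = bicliqueEdges A B ∪ bicliqueEdges A B' := by
  rw [bicliqueEdges_comm, bicliqueEdges_union_left, bicliqueEdges_comm, bicliqueEdges_comm B']

lemma verts_bicliqueEdges_subset (A B : Set V) : verts (bicliqueEdges A B) ⊆ A ∪ B := by
  rintro v ⟨_, ⟨a, ha, b, hb, rfl⟩, hv⟩
  rcases Sym2.mem_iff.1 hv with rfl | rfl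
  exacts [Or.inl ha, Or.inr hb]

lemma verts_bicliqueEdges (hA : A.Nonempty) (hB : B.Nonempty) :
    verts (bicliqueEdges A B) = A ∪ B := by
  refine (verts_bicliqueEdges_subset A B).antisymm ?_
  obtain ⟨a₀, ha₀⟩ := hA
  obtain ⟨b₀, hb₀⟩ := hB
  rintro v (hv | hv)
  · exact ⟨s(v, b₀), mk_mem_bicliqueEdges hv hb₀, Sym2.mem_mk_left _ _⟩
  · exact ⟨s(a₀, v), mk_mem_bicliqueEdges ha₀ hv, Sym2.mem_mk_right _ _⟩

lemma ncard_bicliqueEdges [Finite V] (h : Disjoint A B) :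
    (bicliqueEdges A B).ncard = A.ncard * B.ncard := by
  have : bicliqueEdges A B = (fun p : V × V => s(p.1, p.2)) '' A ×ˢ B := by
    ext e
    constructor
    · rintro ⟨a, ha, b, hb, rfl⟩; exact ⟨(a, b), ⟨ha, hb⟩, rfl⟩
    · rintro ⟨⟨a, b⟩, ⟨ha, hb⟩, rfl⟩; exact ⟨a, ha, b, hb, rfl⟩
  rw [this, InjOn.ncard_image, Set.ncard_prod]
  rintro ⟨a, b⟩ ⟨ha, hb⟩ ⟨a', b'⟩ ⟨ha', hb'⟩ he
  rcases Sym2.eq_iff.1 he with ⟨rfl, rfl⟩ | ⟨rfl, rfl⟩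
  · rfl
  · exact absurd rfl (h.ne_of_mem ha hb')

lemma exists_sides_of_subset_bicliqueEdges [Finite V] (h : Disjoint A B)
    (hJ : J ⊆ bicliqueEdges A B) :
    ∃ A' ⊆ A, ∃ B' ⊆ B, Disjoint A' B' ∧ J ⊆ bicliqueEdges A' B' ∧
      (verts J).ncard = A'.ncard + B'.ncard := by
  refine ⟨A ∩ verts J, inter_subset_left, B ∩ verts J, inter_subset_left,
    h.mono inter_subset_left inter_subset_left, ?_, ?_⟩
  · intro e he
    obtain ⟨a, ha, b, hb, rfl⟩ := hJ he
    exact ⟨a, ⟨ha, _, he, Sym2.mem_mk_left _ _⟩, b, ⟨hb, _, he, Sym2.mem_mk_right _ _⟩, rfl⟩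
  · have hsub : verts J ⊆ A ∪ B := by
      rintro v ⟨e, he, hv⟩
      exact verts_bicliqueEdges_subset A B ⟨e, hJ he, hv⟩
    rw [← Set.ncard_union_eq (h.mono inter_subset_left inter_subset_left),
      ← union_inter_distrib_right, inter_eq_self_of_subset_right hsub]

lemma mem_bicliqueCopies_iff {s t : ℕ} :
    C ∈ bicliqueCopies G s t ↔ ∃ A B : Set V, A.ncard = s ∧ B.ncard = t ∧
      (∀ a ∈ A, ∀ b ∈ B, G.Adj a b) ∧ C = bicliqueEdges A B := Iff.rfl

lemma disjoint_of_forall_adj (hadj : ∀ a ∈ A, ∀ b ∈ B, G.Adj a b) :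
    Disjoint A B :=
  disjoint_left.2 fun a ha hb => (hadj a ha a hb).ne rfl

lemma bicliqueEdges_subset_edgeSet (hadj : ∀ a ∈ A, ∀ b ∈ B, G.Adj a b) :
    bicliqueEdges A B ⊆ G.edgeSet := by
  rintro _ ⟨a, ha, b, hb, rfl⟩
  exact hadj a ha b hb

end BicliqueEdges

lemma Matroid.IsCircuit'.nonempty {N : Matroid α} {C : Set α} (hC : N.IsCircuit' C) :
    C.Nonempty :=
  nonempty_iff_ne_empty.2 fun h => hC.2.1 (h ▸ N.empty_indep)

section Rank

variable [Finite α] {N : Matroid α} {C F I U : Set α}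

lemma cast_mrk (N : Matroid α) (F : Set α) : (mrk N F : ℕ∞) = N.eRk F := by
  obtain ⟨I, hI⟩ := N.exists_isBasis' F
  have hmem : I.ncard ∈ {n : ℕ | ∃ J ⊆ F, N.Indep J ∧ J.ncard = n} :=
    ⟨I, hI.subset, hI.indep, rfl⟩
  have hle : ∀ n ∈ {n : ℕ | ∃ J ⊆ F, N.Indep J ∧ J.ncard = n}, n ≤ I.ncard := by
    rintro _ ⟨J, hJF, hJ, rfl⟩
    have := (hJ.encard_le_eRk_of_subset hJF).trans_eq hI.encard_eq_eRk.symm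
    rwa [← (toFinite J).cast_ncard_eq, ← (toFinite I).cast_ncard_eq, Nat.cast_le] at this
  rw [mrk, IsGreatest.csSup_eq ⟨hmem, hle⟩, (toFinite I).cast_ncard_eq, hI.encard_eq_eRk]

lemma mrk_mono (N : Matroid α) : Monotone (mrk N) := fun _ _ h => by
  exact_mod_cast (cast_mrk N _).trans_le ((N.eRk_mono h).trans_eq (cast_mrk N _).symm)

lemma mrk_union_le_mrk_add_ncard (N : Matroid α) (F F' : Set α) :
    mrk N (F ∪ F') ≤ mrk N F + F'.ncard := by
  have := N.eRk_union_le_eRk_add_encard F F'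
  rw [← cast_mrk, ← cast_mrk, ← (toFinite F').cast_ncard_eq] at this
  exact_mod_cast this

lemma mrk_inter_add_mrk_union_le (N : Matroid α) (F F' : Set α) :
    mrk N (F ∩ F') + mrk N (F ∪ F') ≤ mrk N F + mrk N F' := by
  have := N.eRk_inter_add_eRk_union_le F F'
  simp only [← cast_mrk] at this
  exact_mod_cast this

lemma Matroid.Indep.mrk_eq (hI : N.Indep I) : mrk N I = I.ncard := by
  have := hI.eRk_eq_encard
  rw [← cast_mrk, ← (toFinite I).cast_ncard_eq] at this
  exact_mod_cast this

lemma Matroid.Indep.ncard_le_mrk (hI : N.Indep I) (hIF : I ⊆ F) : I.ncard ≤ mrk N F :=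
  hI.mrk_eq ▸ mrk_mono N hIF

lemma Matroid.IsCircuit'.mrk_add_one (hC : N.IsCircuit' C) : mrk N C + 1 = C.ncard := by
  obtain ⟨e, he⟩ := hC.nonempty
  have hlt : mrk N C < C.ncard := by
    have := N.eRk_lt_encard_of_dep_of_finite (toFinite C) ⟨hC.2.1, hC.1⟩
    rwa [← cast_mrk, ← (toFinite C).cast_ncard_eq, Nat.cast_lt] at this
  have hle := (hC.2.2 e he).ncard_le_mrk sdiff_subset
  rw [Set.ncard_sdiff_singleton_of_mem he] at hle
  omega

lemma Matroid.IsCircuit'.mrk_union_add_one_le (hC : N.IsCircuit' C) (hCU : ¬ C ⊆ U) :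
    mrk N (U ∪ C) + 1 ≤ mrk N U + (C \ U).ncard := by
  obtain ⟨e, heC, heU⟩ := not_subset.1 hCU
  have hinter : mrk N (U ∩ C) = (U ∩ C).ncard :=
    ((hC.2.2 e heC).subset fun x hx => ⟨hx.2, by rintro rfl; exact heU hx.1⟩).mrk_eq
  have hsub := mrk_inter_add_mrk_union_le N U C
  have hsplit := Set.ncard_inter_add_ncard_sdiff_eq_ncard C U (toFinite C)
  rw [inter_comm] at hsplit
  have := hC.mrk_add_one
  omega

end Rank

section ProperSeq

variable {X : Set (Set α)} {S : List (Set α)} {Y : Set α}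

@[simp] lemma unionList_nil : unionList ([] : List (Set α)) = ∅ := by simp [unionList]

@[simp] lemma unionList_append_singleton (S : List (Set α)) (Y : Set α) :
    unionList (S ++ [Y]) = unionList S ∪ Y := by
  ext x; simp [unionList, or_and_right, exists_or]

lemma properSeq_nil : ProperSeq X [] := ⟨by simp, fun i => absurd i.2 (by simp)⟩

lemma properSeq_append_singleton_iff :
    ProperSeq X (S ++ [Y]) ↔ ProperSeq X S ∧ Y ∈ X ∧ (S = [] ∨ ¬ Y ⊆ unionList S) := by
  have hget (i : Fin S.length) : (S ++ [Y]).get ⟨i, by simp⟩ = S.get i := by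
    simp [List.getElem_append_left i.2]
  have htake (k : ℕ) (hk : k ≤ S.length) : (S ++ [Y]).take k = S.take k :=
    List.take_append_of_le_length hk
  constructor
  · rintro ⟨hX, hfresh⟩
    refine ⟨⟨fun Z hZ => hX Z (by simp [hZ]), fun i hi => ?_⟩, hX Y (by simp), ?_⟩
    · have := hfresh ⟨i, by simp⟩ hi
      rwa [hget, htake i i.2.le] at this
    · refine or_iff_not_imp_left.2 fun hS => ?_
      simpa using hfresh ⟨S.length, by simp⟩ (List.length_pos_iff.2 hS)
  · rintro ⟨⟨hSX, hSfresh⟩, hY, hYfresh⟩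
    refine ⟨fun Z hZ => ?_, fun i hi => ?_⟩
    · rcases List.mem_append.1 hZ with hZ | hZ
      exacts [hSX Z hZ, (List.mem_singleton.1 hZ) ▸ hY]
    · rcases (Nat.lt_succ_iff.1 (by simpa using i.2)).lt_or_eq with hlt | heq
      · have := hSfresh ⟨i, hlt⟩ hi
        rwa [← hget, ← htake i hlt.le] at this
      · have hne : S ≠ [] := List.ne_nil_of_length_pos (heq ▸ hi)
        have hYfresh := hYfresh.resolve_left hne
        obtain ⟨i, hi'⟩ := i
        simp only at heq
        subst heq
        simpa using hYfresh

end ProperSeq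

section Nullity

variable [Finite α] {N : Matroid α} {X : Set (Set α)}

lemma mrk_unionList_add_length_le (hX : ∀ C ∈ X, N.IsCircuit' C) {S : List (Set α)}
    (hS : ProperSeq X S) : mrk N (unionList S) + S.length ≤ (unionList S).ncard := by
  induction S using List.reverseRecOn with
  | nil => simpa using N.empty_indep.mrk_eq
  | append_singleton S Y ih =>
    obtain ⟨hS, hY, hfresh⟩ := properSeq_append_singleton_iff.1 hS
    have hYU : ¬ Y ⊆ unionList S := by
      rintro hsub
      rcases hfresh with rfl | hfresh
      · obtain ⟨e, he⟩ := (hX Y hY).nonempty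
        simpa using hsub he
      · exact hfresh hsub
    have hstep := (hX Y hY).mrk_union_add_one_le hYU
    have hcard := Set.ncard_sdiff_add_ncard Y (unionList S)
    rw [union_comm] at hcard
    simp only [unionList_append_singleton, List.length_append, List.length_singleton]
    have := ih hS
    omega

lemma mrk_le_valSeq (hX : ∀ C ∈ X, N.IsCircuit' C) {S : List (Set α)} (hS : ProperSeq X S)
    (F : Set α) : (mrk N F : ℤ) ≤ valSeq F S := by
  have hnull := mrk_unionList_add_length_le hX hS
  have hF := mrk_union_le_mrk_add_ncard N (unionList S) (F \ unionList S)
  rw [union_sdiff_self, union_comm] at hF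
  have hmono := mrk_mono N (subset_union_left : F ⊆ F ∪ unionList S)
  have hcard := Set.ncard_sdiff_add_ncard F (unionList S)
  rw [valSeq]
  omega

end Nullity

/-- `M = M_{f_{1,0}}(G)`, the matroid induced by `F ↦ |V(F)|`. -/
def IsBicircularMatroid {V : Type*} (G : SimpleGraph V) (M : Matroid (Sym2 V)) : Prop :=
  ∀ F : Set (Sym2 V), M.Indep F ↔
    F ⊆ G.edgeSet ∧ ∀ I ⊆ F, I.Nonempty → I.ncard ≤ (verts I).ncard

section Bicircular

variable {V : Type*} [Finite V] {G : SimpleGraph V} {M : Matroid (Sym2 V)} {C J : Set (Sym2 V)}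

lemma ncard_le_ncard_verts_of_subset_sdiff {A B : Set V} (hA : A.ncard = 2) (hB : B.ncard = 3)
    (hAB : Disjoint A B) {e : Sym2 V} (he : e ∈ bicliqueEdges A B)
    (hJ : J ⊆ bicliqueEdges A B \ {e}) : J.ncard ≤ (verts J).ncard := by
  obtain ⟨A', hA', B', hB', hAB', hJ', hverts⟩ :=
    exists_sides_of_subset_bicliqueEdges hAB (hJ.trans sdiff_subset)
  have h5 : J.ncard ≤ 5 := by
    have := Set.ncard_le_ncard hJ
    rwa [Set.ncard_sdiff_singleton_of_mem he, ncard_bicliqueEdges hAB, hA, hB] at this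
  have hprod : J.ncard ≤ A'.ncard * B'.ncard :=
    (Set.ncard_le_ncard hJ').trans_eq (ncard_bicliqueEdges hAB')
  have ha : A'.ncard ≤ 2 := hA ▸ Set.ncard_le_ncard hA'
  have hb : B'.ncard ≤ 3 := hB ▸ Set.ncard_le_ncard hB'
  rw [hverts]
  interval_cases A'.ncard <;> interval_cases B'.ncard <;> omega

lemma IsBicircularMatroid.isCircuit' (hM : IsBicircularMatroid G M) (hME : M.E = G.edgeSet)
    (hC : C ∈ bicliqueCopies G 2 3) : M.IsCircuit' C := by
  obtain ⟨A, B, hA, hB, hadj, rfl⟩ := mem_bicliqueCopies_iff.1 hC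
  have hAB := disjoint_of_forall_adj hadj
  have hsub := bicliqueEdges_subset_edgeSet hadj
  refine ⟨hME ▸ hsub, fun hind => ?_, fun e he => (hM _).2 ⟨sdiff_subset.trans hsub,
    fun J hJ _ => ncard_le_ncard_verts_of_subset_sdiff hA hB hAB he hJ⟩⟩
  have hne : (bicliqueEdges A B).Nonempty := by
    rw [← Set.ncard_pos, ncard_bicliqueEdges hAB, hA, hB]; norm_num
  have := ((hM _).1 hind).2 _ subset_rfl hne
  rw [ncard_bicliqueEdges hAB, verts_bicliqueEdges (Set.nonempty_of_ncard_ne_zero (by omega))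
    (Set.nonempty_of_ncard_ne_zero (by omega)), Set.ncard_union_eq hAB, hA, hB] at this
  omega

end Bicircular

section Cover

variable {V : Type*} [Finite V] {G : SimpleGraph V} {A B : Set V}

def BicliqueCoverable (G : SimpleGraph V) (A B : Set V) : Prop :=
  ∃ S : List (Set (Sym2 V)), ProperSeq (bicliqueCopies G 2 3) S ∧
    unionList S = bicliqueEdges A B ∧ S.length + A.ncard + B.ncard = A.ncard * B.ncard

omit [Finite V] in
lemma BicliqueCoverable.symm (h : BicliqueCoverable G A B) : BicliqueCoverable G B A := by
  obtain ⟨S, hS, hU, hlen⟩ := h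
  exact ⟨S, hS, hU.trans (bicliqueEdges_comm A B), by rw [mul_comm]; omega⟩

omit [Finite V] in
lemma bicliqueCoverable_of_ncard_eq (hA : A.ncard = 2) (hB : B.ncard = 3)
    (hadj : ∀ a ∈ A, ∀ b ∈ B, G.Adj a b) : BicliqueCoverable G A B := by
  refine ⟨[] ++ [bicliqueEdges A B], ?_, by simp [unionList], by simp [hA, hB]⟩
  exact properSeq_append_singleton_iff.2 ⟨properSeq_nil, ⟨A, B, hA, hB, hadj, rfl⟩, Or.inl rfl⟩

lemma properSeq_append_fan {S : List (Set (Sym2 V))} {T : Set V} {a₀ a b₁ b₂ v : V}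
    (ha₀ : a₀ ∈ A) (ha : a ∈ A) (haa₀ : a ≠ a₀) (hT : T ⊆ A) (haT : a ∉ T)
    (hb₁ : b₁ ∈ B) (hb₂ : b₂ ∈ B) (hb : b₁ ≠ b₂) (hvB : v ∉ B)
    (hadj : ∀ a ∈ A, ∀ b ∈ insert v B, G.Adj a b)
    (hS : ProperSeq (bicliqueCopies G 2 3) S)
    (hU : unionList S = bicliqueEdges A B ∪ bicliqueEdges T {v}) :
    ProperSeq (bicliqueCopies G 2 3) (S ++ [bicliqueEdges {a₀, a} {v, b₁, b₂}]) ∧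
      unionList (S ++ [bicliqueEdges {a₀, a} {v, b₁, b₂}]) =
        bicliqueEdges A B ∪ bicliqueEdges (T ∪ {a₀, a}) {v} := by
  have hvA : v ∉ A := fun hv => (hadj v hv v (mem_insert v B)).ne rfl
  have hcopy : bicliqueEdges {a₀, a} {v, b₁, b₂} ∈ bicliqueCopies G 2 3 := by
    refine ⟨{a₀, a}, {v, b₁, b₂}, Set.ncard_pair haa₀.symm, ?_, ?_, rfl⟩
    · rw [Set.ncard_insert_of_notMem (by rintro (rfl | rfl) <;> contradiction),
        Set.ncard_pair hb]
    · rintro x (rfl | rfl) y hy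
      all_goals
        refine hadj _ ‹_› y ?_
        rcases hy with rfl | rfl | rfl
        exacts [mem_insert _ _, mem_insert_of_mem _ hb₁, mem_insert_of_mem _ hb₂]
  have hfresh : s(a, v) ∉ unionList S := by
    rw [hU, mem_union, mk_mem_bicliqueEdges_iff, mk_mem_bicliqueEdges_iff]
    rintro ((⟨-, hv⟩ | ⟨hv, -⟩) | (⟨haT', -⟩ | ⟨hv, -⟩))
    exacts [hvB hv, hvA hv, haT haT', hvA (hT hv)]
  refine ⟨properSeq_append_singleton_iff.2 ⟨hS, hcopy, Or.inr fun hsub =>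
    hfresh (hsub (mk_mem_bicliqueEdges (by simp) (by simp)))⟩, ?_⟩
  have hold : bicliqueEdges {a₀, a} {b₁, b₂} ⊆ bicliqueEdges A B :=
    bicliqueEdges_mono (insert_subset ha₀ (singleton_subset_iff.2 ha))
      (insert_subset hb₁ (singleton_subset_iff.2 hb₂))
  rw [unionList_append_singleton, hU, insert_eq v, bicliqueEdges_union_right,
    bicliqueEdges_union_left]
  ext e
  have := @hold e
  simp only [mem_union]
  tauto

lemma BicliqueCoverable.insert_right (h : BicliqueCoverable G A B) (hA : 2 ≤ A.ncard)
    (hB : 2 ≤ B.ncard) {v : V} (hvB : v ∉ B) (hadj : ∀ a ∈ A, ∀ b ∈ insert v B, G.Adj a b) :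
    BicliqueCoverable G A (insert v B) := by
  obtain ⟨S, hS, hU, hlen⟩ := h
  obtain ⟨a₀, a₁, ha₀, ha₁, ha⟩ := (Set.one_lt_ncard_iff (toFinite A)).1 hA
  obtain ⟨b₁, b₂, hb₁, hb₂, hb⟩ := (Set.one_lt_ncard_iff (toFinite B)).1 hB
  have hbase := properSeq_append_fan ha₀ ha₁ ha.symm (empty_subset A) (notMem_empty a₁)
    hb₁ hb₂ hb hvB hadj hS
    (by rw [hU, eq_comm, union_eq_left]; rintro _ ⟨_, h, -⟩; exact h.elim)
  rw [empty_union] at hbase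
  obtain ⟨-, S', hS', hU', hlen'⟩ := (toFinite A).induction_to
    (C := fun T => a₀ ∈ T ∧ ∃ S' : List (Set (Sym2 V)), ProperSeq (bicliqueCopies G 2 3) S' ∧
      unionList S' = bicliqueEdges A B ∪ bicliqueEdges T {v} ∧ S'.length + 1 = S.length + T.ncard)
    {a₀, a₁} (insert_subset ha₀ (singleton_subset_iff.2 ha₁))
    ⟨mem_insert _ _, _, hbase.1, hbase.2, by simp [Set.ncard_pair ha]⟩
    (fun T hTA ⟨ha₀T, S', hS', hU', hlen'⟩ => by
      obtain ⟨a, haA, haT⟩ := exists_of_ssubset hTA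
      have hstep := properSeq_append_fan ha₀ haA (by rintro rfl; exact haT ha₀T) hTA.subset haT
        hb₁ hb₂ hb hvB hadj hS' hU'
      rw [union_insert, union_singleton, insert_eq_of_mem (mem_insert_of_mem a ha₀T)] at hstep
      exact ⟨a, ⟨haA, haT⟩, mem_insert_of_mem _ ha₀T, _, hstep.1, hstep.2, by
        rw [List.length_append, List.length_singleton, Set.ncard_insert_of_notMem haT]; omega⟩)
  refine ⟨S', hS', by rw [hU', insert_eq v, bicliqueEdges_union_right, union_comm], ?_⟩
  rw [Set.ncard_insert_of_notMem hvB, mul_add, mul_one]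
  omega

lemma BicliqueCoverable.of_subset_right {B₀ : Set V} (h : BicliqueCoverable G A B₀)
    (hB₀B : B₀ ⊆ B) (hA : 2 ≤ A.ncard) (hB₀ : 2 ≤ B₀.ncard)
    (hadj : ∀ a ∈ A, ∀ b ∈ B, G.Adj a b) : BicliqueCoverable G A B :=
  ((toFinite B).induction_to (C := fun B' => B₀ ⊆ B' ∧ BicliqueCoverable G A B') B₀ hB₀B
    ⟨subset_rfl, h⟩ fun B' hB'B ⟨hB₀B', hB'⟩ => by
      obtain ⟨v, hvB, hvB'⟩ := exists_of_ssubset hB'B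
      exact ⟨v, ⟨hvB, hvB'⟩, hB₀B'.trans (subset_insert _ _),
        hB'.insert_right hA (hB₀.trans (Set.ncard_le_ncard hB₀B')) hvB'
          fun a ha b hb => hadj a ha b (insert_subset hvB hB'B.subset hb)⟩).2

lemma bicliqueCoverable (hA : 2 ≤ A.ncard) (hB : 3 ≤ B.ncard)
    (hadj : ∀ a ∈ A, ∀ b ∈ B, G.Adj a b) : BicliqueCoverable G A B := by
  obtain ⟨A₀, hA₀A, hA₀⟩ := Set.exists_subset_card_eq hA
  obtain ⟨B₀, hB₀B, hB₀⟩ := Set.exists_subset_card_eq hB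
  have h₀ : BicliqueCoverable G A₀ B₀ :=
    bicliqueCoverable_of_ncard_eq hA₀ hB₀ fun a ha b hb => hadj a (hA₀A ha) b (hB₀B hb)
  have h₁ : BicliqueCoverable G A₀ B :=
    h₀.of_subset_right hB₀B hA₀.ge (by omega) fun a ha b hb => hadj a (hA₀A ha) b hb
  exact (h₁.symm.of_subset_right hA₀A (by omega) hA₀.ge
    fun b hb a ha => (hadj a ha b hb).symm).symm

end Cover

lemma edgeSet_completeBipartiteGraph (V W : Type*) :
    (completeBipartiteGraph V W).edgeSet = bicliqueEdges (range Sum.inl) (range Sum.inr) := by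
  ext e
  induction e using Sym2.ind with
  | _ x y => rcases x with x | x <;> rcases y with y | y <;> simp [bicliqueEdges]

section Val

variable {V : Type*} [Finite V] {G : SimpleGraph V} {A B : Set V} {F J : Set (Sym2 V)}

lemma exists_properSeq_valSeq_add_ncard_le (hadj : ∀ a ∈ A, ∀ b ∈ B, G.Adj a b)
    (hJF : J ⊆ F) (hJ : J ⊆ bicliqueEdges A B) :
    ∃ S, ProperSeq (bicliqueCopies G 2 3) S ∧ valSeq F S + J.ncard ≤ F.ncard + (verts J).ncard := by
  obtain ⟨A', hA', B', hB', hAB', hJ', hverts⟩ :=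
    exists_sides_of_subset_bicliqueEdges (disjoint_of_forall_adj hadj) hJ
  rw [hverts]
  by_cases hsmall : J.ncard ≤ A'.ncard + B'.ncard
  · exact ⟨[], properSeq_nil, by simp [valSeq]; omega⟩
  have hadj' : ∀ a ∈ A', ∀ b ∈ B', G.Adj a b := fun a ha b hb => hadj a (hA' ha) b (hB' hb)
  have hJK : J.ncard ≤ A'.ncard * B'.ncard :=
    (Set.ncard_le_ncard hJ').trans_eq (ncard_bicliqueEdges hAB')
  obtain ⟨S, hS, hU, hlen⟩ : BicliqueCoverable G A' B' := by
    rcases Nat.two_le_and_three_le_or_of_add_lt_mul (by omega : A'.ncard + B'.ncard < _)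
      with ⟨ha, hb⟩ | ⟨ha, hb⟩
    · exact bicliqueCoverable ha hb hadj'
    · exact (bicliqueCoverable hb ha fun b hb a ha => (hadj' a ha b hb).symm).symm
  refine ⟨S, hS, ?_⟩
  have hunion := Set.ncard_sdiff_add_ncard (bicliqueEdges A' B') F
  have hFJ := Set.ncard_le_ncard (sdiff_subset_sdiff_right hJF (s := bicliqueEdges A' B'))
  have hJsplit := Set.ncard_sdiff_add_ncard_of_subset hJ'
  rw [ncard_bicliqueEdges hAB'] at hJsplit
  rw [valSeq, hU, union_comm]
  omega

end Val

section Hall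

variable {V : Type*} [Finite V] {G : SimpleGraph V} {M : Matroid (Sym2 V)} {F : Set (Sym2 V)}

lemma exists_subset_ncard_verts_add_eq_forall_ncard_le (F : Set (Sym2 V)) :
    ∃ J ⊆ F, ∃ d : ℕ, (verts J).ncard + d = J.ncard ∧
      ∀ J' ⊆ F, J'.ncard ≤ (verts J').ncard + d := by
  obtain ⟨J, hJF, hmax⟩ := Set.exists_max_image (𝒫 F)
    (fun J => (J.ncard : ℤ) - (verts J).ncard) (toFinite _) ⟨∅, empty_subset F⟩
  have hempty : verts (∅ : Set (Sym2 V)) = ∅ := by simp [verts]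
  have hverts := hmax ∅ (empty_subset F)
  simp only [hempty, Set.ncard_empty] at hverts
  refine ⟨J, hJF, J.ncard - (verts J).ncard, by omega, fun J' hJ' => ?_⟩
  have := hmax J' hJ'
  omega

lemma IsBicircularMatroid.ncard_le_mrk_add (hM : IsBicircularMatroid G M) (hFE : F ⊆ G.edgeSet)
    {d : ℕ} (hd : ∀ J ⊆ F, J.ncard ≤ (verts J).ncard + d) : F.ncard ≤ mrk M F + d := by
  classical
  have hverts (w : Finset (Sym2 V)) :
      (w.biUnion Sym2.toFinset).card = (verts (w : Set (Sym2 V))).ncard := by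
    rw [← Set.ncard_coe_finset]
    congr 1
    ext v
    simp [verts]
  obtain ⟨u, huF, hcard, hu⟩ :=
    (toFinite F).toFinset.exists_hall_subfamily_of_card_le_card_biUnion_add Sym2.toFinset d
      fun w hw => by
        rw [hverts, ← Set.ncard_coe_finset]
        exact hd _ (by simpa using hw)
  have huF' : (u : Set (Sym2 V)) ⊆ F := by simpa using huF
  have hind : M.Indep u := (hM u).2 ⟨huF'.trans hFE, fun I hI _ => by
    lift I to Finset (Sym2 V) using toFinite I
    rw [Set.ncard_coe_finset, ← hverts]
    exact hu I (by exact_mod_cast hI)⟩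
  have := hind.ncard_le_mrk huF'
  rw [Set.ncard_coe_finset] at this
  rw [Set.ncard_eq_toFinset_card F (toFinite F)]
  omega

end Hall

lemma exists_properSeq_valSeq_add_ncard_le_of_completeBipartite {V W : Type*} [Finite V]
    [Finite W] {F J : Set (Sym2 (V ⊕ W))} (hJF : J ⊆ F)
    (hFE : F ⊆ (completeBipartiteGraph V W).edgeSet) :
    ∃ S, ProperSeq (bicliqueCopies (completeBipartiteGraph V W) 2 3) S ∧
      valSeq F S + J.ncard ≤ F.ncard + (verts J).ncard := by
  refine exists_properSeq_valSeq_add_ncard_le ?_ hJF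
    (hJF.trans (hFE.trans_eq (edgeSet_completeBipartiteGraph V W)))
  rintro _ ⟨a, rfl⟩ _ ⟨b, rfl⟩
  simp

theorem bicircular_unique_maximal_K23 (m n : ℕ) (M : Matroid (Sym2 (Fin m ⊕ Fin n)))
    (hME : M.E = (completeBipartiteGraph (Fin m) (Fin n)).edgeSet)
    (hMI : ∀ F : Set (Sym2 (Fin m ⊕ Fin n)), M.Indep F ↔
      F ⊆ (completeBipartiteGraph (Fin m) (Fin n)).edgeSet ∧
      ∀ I ⊆ F, I.Nonempty → I.ncard ≤ (verts I).ncard) :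
    IsXMatroid (completeBipartiteGraph (Fin m) (Fin n)).edgeSet
      (bicliqueCopies (completeBipartiteGraph (Fin m) (Fin n)) 2 3) M ∧
    (∀ N : Matroid (Sym2 (Fin m ⊕ Fin n)),
      IsXMatroid (completeBipartiteGraph (Fin m) (Fin n)).edgeSet
        (bicliqueCopies (completeBipartiteGraph (Fin m) (Fin n)) 2 3) N → WeakLE N M) ∧
    ∀ F ⊆ (completeBipartiteGraph (Fin m) (Fin n)).edgeSet,
      (mrk M F : ℤ) = valX (bicliqueCopies (completeBipartiteGraph (Fin m) (Fin n)) 2 3) F := by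
  set X := bicliqueCopies (completeBipartiteGraph (Fin m) (Fin n)) 2 3
  have hX : ∀ C ∈ X, M.IsCircuit' C :=
    fun C hC => IsBicircularMatroid.isCircuit' hMI hME hC
  refine ⟨⟨hME, hX⟩, fun N ⟨hNE, hNX⟩ I hI => ?_, fun F hFE => ?_⟩
  · refine (hMI I).2 ⟨hNE ▸ hI.subset_ground, fun J hJI _ => ?_⟩
    obtain ⟨S, hS, hval⟩ := exists_properSeq_valSeq_add_ncard_le_of_completeBipartite subset_rfl
      (hJI.trans (hNE ▸ hI.subset_ground))
    have := mrk_le_valSeq hNX hS J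
    rw [(hI.subset hJI).mrk_eq] at this
    omega
  · obtain ⟨J, hJF, d, hJ, hd⟩ := exists_subset_ncard_verts_add_eq_forall_ncard_le F
    obtain ⟨S, hS, hval⟩ := exists_properSeq_valSeq_add_ncard_le_of_completeBipartite hJF hFE
    have hrank := IsBicircularMatroid.ncard_le_mrk_add hMI hFE hd
    have hlower : (mrk M F : ℤ) ∈ lowerBounds {v | ∃ S, ProperSeq X S ∧ v = valSeq F S} := by
      rintro _ ⟨S, hS, rfl⟩
      exact mrk_le_valSeq hX hS F
    refine le_antisymm (le_csInf ⟨_, [], properSeq_nil, rfl⟩ hlower)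
      ((csInf_le ⟨_, hlower⟩ ⟨S, hS, rfl⟩).trans ?_)
    omega
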